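/- arXiv:0810.1735 — 7 statements merged into one kernel-verified Lean document; each statement's English description precedes it below -/
import Mathlib

section
/- In any graph G such that the subgraph induced by each color class of a given vertex partition (the 'input' partition) is co-P_3-free (i.e., complete multipartite), if S is a set of k > 1 pairwise nonadjacent vertices all adjacent to a common vertex v, and every edge of G is either an 'output edge' (both endpoints share the same output label, and vertices with the same output label form a clique) or an 'input edge', then at least k-1 vertices of S have the same input label as v. -/
/-! Two neighbours of `v` on inputs other than `v`'s are joined to `v` by output edges, so they
share `v`'s output and are therefore adjacent. Hence an independent set in the neighbourhood
of `v` has at most one vertex off `v`'s input. -/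

namespace SimpleGraph

variable {V I O : Type*} (G : SimpleGraph V) {inp : V → I} {out : V → O}

theorem out_eq_of_adj_of_inp_ne (hedge : ∀ u w, G.Adj u w → out u = out w ∨ inp u = inp w)
    {u w : V} (huw : G.Adj u w) (hinp : inp u ≠ inp w) : out u = out w :=
  (hedge u w huw).resolve_right hinp

theorem card_filter_inp_ne_le_one [DecidableEq I]
    (hedge : ∀ u w, G.Adj u w → out u = out w ∨ inp u = inp w)
    (hout : ∀ u w, u ≠ w → out u = out w → G.Adj u w)
    {S : Finset V} (hS : G.IsIndepSet S) {v : V} (hv : ∀ u ∈ S, G.Adj v u) :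
    (S.filter (fun u => inp u ≠ inp v)).card ≤ 1 := by
  refine Finset.card_le_one.mpr fun a ha b hb => by_contra fun hab => ?_
  rw [Finset.mem_filter] at ha hb
  have hva := G.out_eq_of_adj_of_inp_ne hedge (hv a ha.1) (Ne.symm ha.2)
  have hvb := G.out_eq_of_adj_of_inp_ne hedge (hv b hb.1) (Ne.symm hb.2)
  exact hS ha.1 hb.1 hab (hout a b hab (hva.symm.trans hvb))

end SimpleGraph

theorem stmt2_general {V I O : Type*} [DecidableEq I] (G : SimpleGraph V)
    (inp : V → I) (out : V → O)
    (hedge : ∀ u w, G.Adj u w → out u = out w ∨ inp u = inp w)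
    (hout : ∀ u w, u ≠ w → out u = out w → G.Adj u w)
    (S : Finset V) (k : ℕ) (hcard : S.card = k)
    (hstable : ∀ u ∈ S, ∀ w ∈ S, u ≠ w → ¬ G.Adj u w)
    (v : V) (hv : ∀ u ∈ S, G.Adj v u) :
    k - 1 ≤ (S.filter (fun u => inp u = inp v)).card := by
  have hoff := G.card_filter_inp_ne_le_one hedge hout hstable hv
  simp only [ne_eq] at hoff
  have hsplit := Finset.card_filter_add_card_filter_not (s := S) (p := fun u => inp u = inp v)
  omega

/-- In a graph whose every edge is an "output edge" (endpoints with the same output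
label, which form cliques) or an "input edge", and in which each input class induces a
complete multipartite (co-P₃-free) graph, if `S` is a set of `k > 1` pairwise
nonadjacent vertices all adjacent to a common vertex `v`, then at least `k - 1`
vertices of `S` carry the same input label as `v`. -/
theorem stmt2 {V I O : Type*} [DecidableEq I] (G : SimpleGraph V)
    (inp : V → I) (out : V → O)
    (hedge : ∀ u w, G.Adj u w → out u = out w ∨ inp u = inp w)
    (hout : ∀ u w, u ≠ w → out u = out w → G.Adj u w)
    (hmultipartite : ¬ ∃ a b c : V, inp a = inp b ∧ inp b = inp c ∧
      a ≠ b ∧ a ≠ c ∧ b ≠ c ∧ G.Adj b c ∧ ¬ G.Adj a b ∧ ¬ G.Adj a c)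
    (S : Finset V) (k : ℕ) (hk : 1 < k) (hcard : S.card = k)
    (hstable : ∀ u ∈ S, ∀ w ∈ S, u ≠ w → ¬ G.Adj u w)
    (v : V) (hv : ∀ u ∈ S, G.Adj v u) :
    k - 1 ≤ (S.filter (fun u => inp u = inp v)).card :=
  stmt2_general G inp out hedge hout S k hcard hstable v hv
end

section
/- The webbed claw graph cannot occur as an induced subgraph of the enhanced conflict graph of any multicast switch traffic pattern. -/
/-!
Every neighbour of a subflow `e` in the enhanced conflict graph shares either its output or
its input. Neighbours sharing the output of `e` are pairwise adjacent, and among subflows of a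
single input, non-adjacency of distinct subflows means equal fanouts, hence is transitive: no
vertex can be non-adjacent to both ends of an edge. In the webbed claw with centre `E`, the
leaf `F` and the edges `AB`, `CD` are pairwise non-adjacent, so at most one of them contains
an output-sharing neighbour of `E`; the other two then consist of input-sharing neighbours,
and one of them is an edge with a vertex non-adjacent to both of its ends.
-/

/-- A subflow of a multicast traffic pattern: an input, a fanout set of outputs,
and a particular output in the fanout. -/
structure Subflow (I O : Type*) where
  inp : I
  fanout : Set O
  out : O
  mem : out ∈ fanout

/-- The enhanced conflict graph: two distinct subflows are adjacent iff they have
the same output, or the same input but different fanout sets. -/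
def enhancedConflictGraph (I O : Type*) : SimpleGraph (Subflow I O) where
  Adj a b := a ≠ b ∧ (a.out = b.out ∨ (a.inp = b.inp ∧ a.fanout ≠ b.fanout))
  symm := ⟨by
    rintro a b ⟨hne, h | ⟨h1, h2⟩⟩
    · exact ⟨hne.symm, Or.inl h.symm⟩
    · exact ⟨hne.symm, Or.inr ⟨h1.symm, h2.symm⟩⟩⟩
  loopless := ⟨by rintro a ⟨hne, _⟩; exact hne rfl⟩

/-- The webbed claw: vertices `0,…,5` with central vertex `4` adjacent to all
others, plus the edges `{0,1}` and `{2,3}`. -/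
def webbedClaw : SimpleGraph (Fin 6) :=
  SimpleGraph.fromRel (fun a b =>
    (a, b) ∈ [((0 : Fin 6), (1 : Fin 6)), (2, 3), (4, 0), (4, 1), (4, 2), (4, 3), (4, 5)])

section

variable {I O : Type*}

theorem Subflow.ext {s t : Subflow I O} (hi : s.inp = t.inp) (hf : s.fanout = t.fanout)
    (ho : s.out = t.out) : s = t := by
  cases s; cases t; cases hi; cases hf; cases ho; rfl

namespace enhancedConflictGraph

variable {a b c e : Subflow I O}

theorem adj_of_out_eq (hne : a ≠ b) (h : a.out = b.out) : (enhancedConflictGraph I O).Adj a b :=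
  ⟨hne, Or.inl h⟩

theorem out_eq_or_inp_eq_of_adj (h : (enhancedConflictGraph I O).Adj a b) :
    a.out = b.out ∨ a.inp = b.inp :=
  h.2.imp_right And.left

theorem fanout_eq_of_not_adj (hne : a ≠ b) (h : ¬(enhancedConflictGraph I O).Adj a b)
    (hi : a.inp = b.inp) : a.fanout = b.fanout :=
  of_not_not fun hf => h ⟨hne, Or.inr ⟨hi, hf⟩⟩

theorem adj_or_adj_of_inp_eq (hab : (enhancedConflictGraph I O).Adj a b) (hac : a ≠ c)
    (hbc : b ≠ c) (ha : a.inp = c.inp) (hb : b.inp = c.inp) :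
    (enhancedConflictGraph I O).Adj a c ∨ (enhancedConflictGraph I O).Adj b c := by
  by_contra! h
  have hf : a.fanout = b.fanout :=
    (fanout_eq_of_not_adj hac h.1 ha).trans (fanout_eq_of_not_adj hbc h.2 hb).symm
  have ho : a.out = b.out := hab.2.resolve_right fun h' => h'.2 hf
  exact hab.ne (Subflow.ext (ha.trans hb.symm) hf ho)

theorem inp_eq_of_adj_of_out_eq (hea : (enhancedConflictGraph I O).Adj e a) (heb : e.out = b.out)
    (hab : a ≠ b) (h : ¬(enhancedConflictGraph I O).Adj a b) : e.inp = a.inp :=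
  (out_eq_or_inp_eq_of_adj hea).resolve_left fun hea' =>
    h (adj_of_out_eq hab (hea'.symm.trans heb))

end enhancedConflictGraph

instance : DecidableRel webbedClaw.Adj := fun a b =>
  decidable_of_iff' _ (SimpleGraph.fromRel_adj _ a b)

open enhancedConflictGraph in
theorem isEmpty_webbedClaw_embedding : IsEmpty (webbedClaw ↪g enhancedConflictGraph I O) := by
  refine ⟨fun φ => ?_⟩
  have adj {i j : Fin 6} (h : webbedClaw.Adj i j) :
      (enhancedConflictGraph I O).Adj (φ i) (φ j) := φ.map_adj_iff.2 h
  have nadj {i j : Fin 6} (h : ¬webbedClaw.Adj i j) :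
      ¬(enhancedConflictGraph I O).Adj (φ i) (φ j) := mt φ.map_adj_iff.1 h
  have inp_of_out {i j : Fin 6} (hj : (φ 4).out = (φ j).out)
      (h : webbedClaw.Adj 4 i ∧ i ≠ j ∧ ¬webbedClaw.Adj i j) : (φ 4).inp = (φ i).inp :=
    inp_eq_of_adj_of_out_eq (adj h.1) hj (φ.injective.ne h.2.1) (nadj h.2.2)
  have no_edge_vertex (i j k : Fin 6)
      (h : webbedClaw.Adj i j ∧ i ≠ k ∧ j ≠ k ∧ ¬webbedClaw.Adj i k ∧ ¬webbedClaw.Adj j k)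
      (hi : (φ 4).inp = (φ i).inp) (hj : (φ 4).inp = (φ j).inp) (hk : (φ 4).inp = (φ k).inp) :
      False := by
    obtain ⟨hij, hik, hjk, hnik, hnjk⟩ := h
    rcases adj_or_adj_of_inp_eq (adj hij) (φ.injective.ne hik) (φ.injective.ne hjk)
      (hi.symm.trans hk) (hj.symm.trans hk) with h | h
    exacts [nadj hnik h, nadj hnjk h]
  have neighbour (j : Fin 6) (h : webbedClaw.Adj 4 j) := out_eq_or_inp_eq_of_adj (adj h)
  rcases neighbour 5 (by decide) with h5 | h5
  · exact no_edge_vertex 0 1 2 (by decide) (inp_of_out h5 (by decide))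
      (inp_of_out h5 (by decide)) (inp_of_out h5 (by decide))
  rcases neighbour 0 (by decide) with h0 | h0
  · exact no_edge_vertex 2 3 5 (by decide) (inp_of_out h0 (by decide))
      (inp_of_out h0 (by decide)) h5
  rcases neighbour 1 (by decide) with h1 | h1
  · exact no_edge_vertex 2 3 5 (by decide) (inp_of_out h1 (by decide))
      (inp_of_out h1 (by decide)) h5
  exact no_edge_vertex 0 1 5 (by decide) h0 h1 h5

end

/-- The webbed claw does not occur as an induced subgraph of the enhanced conflict
graph of any multicast switch traffic pattern. -/
theorem stmt3 {I O : Type*} :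
    ¬ ∃ f : Fin 6 → Subflow I O, Function.Injective f ∧
      ∀ a b : Fin 6,
        (enhancedConflictGraph I O).Adj (f a) (f b) ↔ webbedClaw.Adj a b := by
  rintro ⟨f, hf, hadj⟩
  exact isEmpty_webbedClaw_embedding.false ⟨⟨f, hf⟩, hadj _ _⟩
end

section
/- The Replication Lemma for perfect graphs: if G = (V,E) is perfect and v ∈ V, and G' is obtained by adding a new vertex v' adjacent to v and to all neighbors of v, then G' is perfect. -/
/-- A graph is perfect if for every induced subgraph the chromatic number equals
the clique number. -/
def SimpleGraph.IsPerfect {V : Type*} (G : SimpleGraph V) : Prop :=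
  ∀ s : Set V, (G.induce s).chromaticNumber = ((G.induce s).cliqueNum : ℕ∞)

/-- The graph obtained from `G` by replicating the vertex `v`: the new vertex
(`none`) is joined to `v` and to all neighbours of `v`. -/
def SimpleGraph.replicate {V : Type*} (G : SimpleGraph V) (v : V) :
    SimpleGraph (Option V) where
  Adj a b :=
    match a, b with
    | some x, some y => G.Adj x y
    | some x, none => x = v ∨ G.Adj x v
    | none, some y => y = v ∨ G.Adj y v
    | none, none => False
  symm := by
    refine ⟨?_⟩
    rintro (_ | x) (_ | y) h
    · exact h
    · exact h
    · exact h
    · exact h.symm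
  loopless := by
    refine ⟨?_⟩
    rintro (_ | x) h
    · exact h
    · exact G.loopless.irrefl x h

/-!
Replicating `v` makes `none` and `some v` adjacent true twins, and deleting `none` gives back
`G`. So it suffices that a graph `H` with adjacent twins `u`, `w` is perfect as soon as `H - u`
is (Lovász). An induced subgraph missing `u` lies in `H - u`, and one containing `u` but not `w`
is isomorphic to one missing `u` via the automorphism swapping `u` and `w`.

If both `u` and `w` are present, we may take `H` to be the whole graph. Let `n = ω(H - u)` and
fix an `n`-colouring `c` of `H - u`. If `H` has an `(n + 1)`-clique, a new colour for `u` gives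
`χ(H) ≤ n + 1 = ω(H)`. Otherwise drop from `H - u` the vertices other than `w` of the colour
class of `w`: an `n`-clique in what remains meets every colour class, so it contains `w` and
extends by `u`, which is impossible. By perfection what remains is `(n - 1)`-colourable, and the
dropped vertices together with `u` form an independent set, which takes one more colour.
-/

namespace SimpleGraph

variable {V W α : Type*} {G : SimpleGraph V} {H : SimpleGraph W} {u w : W}

lemma IsNClique.map_embedding (f : G ↪g H) {n : ℕ} {s : Finset V} (h : G.IsNClique n s) :
    H.IsNClique n (s.map f.toEmbedding) :=
  h.map.mono ((map_le_iff_le_comap _ _ _).2 (f.comap_eq).ge)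

lemma cliqueNum_congr (e : G ≃g H) : G.cliqueNum = H.cliqueNum := by
  have hsets : {n | ∃ s, G.IsNClique n s} = {n | ∃ s, H.IsNClique n s} := by
    ext n
    exact ⟨fun ⟨s, hs⟩ ↦ ⟨_, hs.map_embedding e.toEmbedding⟩,
      fun ⟨s, hs⟩ ↦ ⟨_, hs.map_embedding e.symm.toEmbedding⟩⟩
  rw [cliqueNum, cliqueNum, hsets]

lemma IsNClique.le_cliqueNum {n k : ℕ} {s : Finset V} (h : G.IsNClique n s)
    (hG : G.Colorable k) : n ≤ G.cliqueNum :=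
  le_csSup ⟨k, fun _ ⟨_, ht⟩ ↦ ht.card_eq ▸ ht.isClique.card_le_of_colorable hG⟩ ⟨s, h⟩

lemma cliqueNum_le_of_embedding {k : ℕ} (f : G ↪g H) (hH : H.Colorable k) :
    G.cliqueNum ≤ H.cliqueNum :=
  have ⟨_, hs⟩ := G.exists_isNClique_cliqueNum
  (hs.map_embedding f).le_cliqueNum hH

lemma CliqueFree.cliqueNum_lt {n : ℕ} (h : G.CliqueFree n) : G.cliqueNum < n :=
  have ⟨s, hs⟩ := G.exists_isNClique_cliqueNum
  lt_of_not_ge fun hn ↦ h.mono hn s hs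

lemma colorable_cliqueNum_of_chromaticNumber_eq
    (h : G.chromaticNumber = G.cliqueNum) : G.Colorable G.cliqueNum :=
  chromaticNumber_le_iff_colorable.mp h.le

lemma chromaticNumber_eq_cliqueNum_of_colorable {k : ℕ} (hG : G.Colorable k)
    (hk : k ≤ G.cliqueNum) : G.chromaticNumber = G.cliqueNum :=
  le_antisymm (hG.chromaticNumber_le.trans (by exact_mod_cast hk)) cliqueNum_le_chromaticNumber

lemma Colorable.succ_of_induce_of_isIndepSet_compl {s : Set V} {n : ℕ}
    (hs : (G.induce s).Colorable n) (hsc : G.IsIndepSet sᶜ) : G.Colorable (n + 1) := by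
  classical
  obtain ⟨c⟩ := hs
  let C : G.Coloring (Option (Fin n)) := Coloring.mk
    (fun x ↦ if hx : x ∈ s then some (c ⟨x, hx⟩) else none)
    (by
      intro x y hxy
      by_cases hx : x ∈ s <;> by_cases hy : y ∈ s
      · simpa [hx, hy] using c.valid (show (G.induce s).Adj ⟨x, hx⟩ ⟨y, hy⟩ from hxy)
      · simp [hx, hy]
      · simp [hx, hy]
      · exact absurd hxy (hsc hx hy hxy.ne))
  simpa using C.colorable

lemma IsPerfect.chromaticNumber_eq_of_embedding (hG : G.IsPerfect) (f : H ↪g G) :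
    H.chromaticNumber = H.cliqueNum := by
  have e := f.isoInduceRange
  rw [chromaticNumber_congr e, cliqueNum_congr e]
  exact hG _

lemma IsPerfect.of_embedding (hG : G.IsPerfect) (f : H ↪g G) : H.IsPerfect :=
  fun s ↦ hG.chromaticNumber_eq_of_embedding ((Embedding.induce s).trans f)

def Iso.swapOfTwins [DecidableEq W] (htwin : ∀ x, x ≠ u → x ≠ w → (H.Adj u x ↔ H.Adj w x)) :
    H ≃g H where
  toEquiv := Equiv.swap u w
  map_rel_iff' := by
    intro x y
    have := htwin x
    have := htwin y
    simp only [Equiv.swap_apply_def]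
    split_ifs <;> subst_vars <;> grind [H.adj_comm, H.loopless.irrefl]

def Coloring.pruneColorClass {s : Set W} (c : (H.induce s).Coloring α) (w : s) : Set W :=
  {x | ∃ hx : x ∈ s, x = w ∨ c ⟨x, hx⟩ ≠ c w}

lemma Coloring.pruneColorClass_subset {s : Set W} (c : (H.induce s).Coloring α) (w : s) :
    c.pruneColorClass w ⊆ s :=
  fun _ ⟨hx, _⟩ ↦ hx

lemma isIndepSet_compl_pruneColorClass (huw : H.Adj u w)
    (htwin : ∀ x, x ≠ u → x ≠ w → (H.Adj u x ↔ H.Adj w x))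
    (c : (H.induce {u}ᶜ).Coloring α) : H.IsIndepSet (c.pruneColorClass ⟨w, huw.ne'⟩)ᶜ := by
  set t := c.pruneColorClass ⟨w, huw.ne'⟩
  have hclass : ∀ x (hx : x ≠ u), x ∉ t → x ≠ w ∧ c ⟨x, hx⟩ = c ⟨w, huw.ne'⟩ := by
    intro x hx hxt
    simp only [t, Coloring.pruneColorClass, Set.mem_ofPred_eq, not_exists, not_or,
      not_not] at hxt
    exact hxt hx
  have hu : ∀ y (hy : y ≠ u), y ∉ t → ¬H.Adj u y := by
    intro y hyu hy huy
    obtain ⟨hyw, hcy⟩ := hclass y hyu hy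
    exact c.valid (show (H.induce {u}ᶜ).Adj ⟨w, huw.ne'⟩ ⟨y, hyu⟩ from
      (htwin y hyu hyw).1 huy) hcy.symm
  intro x hx y hy hne hxy
  by_cases hxu : x = u <;> by_cases hyu : y = u
  · exact hne (hxu.trans hyu.symm)
  · exact hu y hyu hy (hxu ▸ hxy)
  · exact hu x hxu hx (hyu ▸ hxy.symm)
  · exact c.valid (show (H.induce {u}ᶜ).Adj ⟨x, hxu⟩ ⟨y, hyu⟩ from hxy)
      ((hclass x hxu hx).2.trans (hclass y hyu hy).2.symm)

lemma cliqueFree_induce_pruneColorClass {n : ℕ} (huw : H.Adj u w)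
    (htwin : ∀ x, x ≠ u → x ≠ w → (H.Adj u x ↔ H.Adj w x))
    (c : (H.induce {u}ᶜ).Coloring (Fin n)) (hfree : H.CliqueFree (n + 1)) :
    (H.induce (c.pruneColorClass ⟨w, huw.ne'⟩)).CliqueFree n := by
  classical
  rw [cliqueFree_induce_iff]
  intro K hKt hK
  have hKu : ∀ x ∈ K, x ∈ ({u}ᶜ : Set W) := fun x hx ↦ c.pruneColorClass_subset _ (hKt hx)
  have hK' : (H.induce {u}ᶜ).IsNClique n (K.subtype (· ∈ ({u}ᶜ : Set W))) := by
    rwa [isNClique_induce_iff, Finset.subtype_map_of_mem hKu]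
  obtain ⟨x, hxK, hxw⟩ := c.surjOn_of_card_le_isClique hK'.isClique (by simp [hK'.card_eq])
    (Set.mem_univ (c ⟨w, huw.ne'⟩))
  have hwK : w ∈ K := by
    obtain ⟨_, hxw' | hxc⟩ := hKt (Finset.mem_subtype.mp hxK)
    · exact (show (x : W) = w from hxw') ▸ Finset.mem_subtype.mp hxK
    · exact absurd hxw hxc
  refine hfree _ (hK.insert (a := u) fun b hb ↦ ?_)
  obtain rfl | hbw := eq_or_ne b w
  · exact huw
  · exact (htwin b (hKu b hb) hbw).2 (hK.isClique hwK hb (Ne.symm hbw))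

theorem chromaticNumber_eq_cliqueNum_of_twins (huw : H.Adj u w)
    (htwin : ∀ x, x ≠ u → x ≠ w → (H.Adj u x ↔ H.Adj w x))
    (hperf : (H.induce {u}ᶜ).IsPerfect) : H.chromaticNumber = H.cliqueNum := by
  set n := (H.induce {u}ᶜ).cliqueNum
  have hc : (H.induce {u}ᶜ).Colorable n := colorable_cliqueNum_of_chromaticNumber_eq
    (hperf.chromaticNumber_eq_of_embedding .refl)
  have hcol : H.Colorable (n + 1) := hc.succ_of_induce_of_isIndepSet_compl <| by
    intro x hx y hy hxy
    simp_all
  have hn : n ≤ H.cliqueNum := cliqueNum_le_of_embedding (Embedding.induce _) hcol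
  by_cases hfree : H.CliqueFree (n + 1)
  · let c := hc.some
    let t := c.pruneColorClass ⟨w, huw.ne'⟩
    have hk : (H.induce t).Colorable (H.induce t).cliqueNum :=
      colorable_cliqueNum_of_chromaticNumber_eq
        (hperf.chromaticNumber_eq_of_embedding (H.induceHomOfLE (c.pruneColorClass_subset _)))
    exact chromaticNumber_eq_cliqueNum_of_colorable
      (hk.succ_of_induce_of_isIndepSet_compl (isIndepSet_compl_pruneColorClass huw htwin c))
      ((cliqueFree_induce_pruneColorClass huw htwin c hfree).cliqueNum_lt.trans_le hn)
  · obtain ⟨s, hs⟩ := not_forall_not.mp hfree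
    exact chromaticNumber_eq_cliqueNum_of_colorable hcol (hs.le_cliqueNum hcol)

theorem isPerfect_of_twins (huw : H.Adj u w)
    (htwin : ∀ x, x ≠ u → x ≠ w → (H.Adj u x ↔ H.Adj w x))
    (hperf : (H.induce {u}ᶜ).IsPerfect) : H.IsPerfect := by
  classical
  intro s
  by_cases hu : u ∈ s
  swap
  · exact hperf.chromaticNumber_eq_of_embedding
      (H.induceHomOfLE fun x hx ↦ ne_of_mem_of_not_mem hx hu)
  by_cases hw : w ∈ s
  · refine chromaticNumber_eq_cliqueNum_of_twins (u := ⟨u, hu⟩) (w := ⟨w, hw⟩) huw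
      (fun x hxu hxw ↦ htwin x (fun h ↦ hxu (Subtype.ext h)) fun h ↦ hxw (Subtype.ext h)) ?_
    refine hperf.of_embedding ⟨⟨fun x ↦ ⟨x.1.1, fun h ↦ x.2 (Subtype.ext h)⟩, ?_⟩, Iff.rfl⟩
    exact fun x y h ↦ by simpa [Subtype.ext_iff] using h
  · let σ := Iso.swapOfTwins htwin
    have hσ : σ '' s ⊆ {u}ᶜ := by
      rintro _ ⟨x, hx, rfl⟩ hxu
      simp_all [σ, Iso.swapOfTwins, Equiv.swap_apply_eq_iff]
    exact hperf.chromaticNumber_eq_of_embedding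
      ((σ.induce (σ.injective.injOn.bijOn_image)).toEmbedding.trans (H.induceHomOfLE hσ))

def Embedding.replicate (G : SimpleGraph V) (v : V) : G ↪g G.replicate v where
  toFun := some
  inj' := Option.some_injective V
  map_rel_iff' := Iff.rfl

end SimpleGraph

/-- The Replication Lemma: replicating a vertex of a perfect graph yields a
perfect graph. -/
theorem stmt9 {V : Type*} (G : SimpleGraph V) (v : V) (hG : G.IsPerfect) :
    (G.replicate v).IsPerfect := by
  refine SimpleGraph.isPerfect_of_twins (u := none) (w := some v) (Or.inl rfl) ?_ ?_
  · rintro (_ | x) hx hxv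
    · exact absurd rfl hx
    · show x = v ∨ G.Adj x v ↔ G.Adj v x
      simp [G.adj_comm, Option.some_injective _ |>.ne_iff.mp hxv]
  · rw [← Set.compl_range_some, compl_compl]
    exact hG.of_embedding (SimpleGraph.Embedding.replicate G v).isoInduceRange.symm.toEmbedding
end

section
/- If every vertex of a graph G can be covered exactly q times by a family of p induced perfect subgraphs of G, then the imperfection ratio of G is at most p/q. -/
open Pointwise

/-- The stable set polytope `STAB(G)`: the convex hull of the incidence vectors
of stable sets of `G`. -/
def stabPolytope {V : Type*} (G : SimpleGraph V) : Set (V → ℝ) :=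
  convexHull ℝ {x | ∃ s : Finset V,
    (∀ u ∈ s, ∀ w ∈ s, ¬ G.Adj u w) ∧ x = Set.indicator (↑s) (fun _ => (1 : ℝ))}

/-- The fractional stable set polytope `QSTAB(G)`: nonnegativity together with
the clique inequalities. -/
def qstab {V : Type*} (G : SimpleGraph V) : Set (V → ℝ) :=
  {x | (∀ v, 0 ≤ x v) ∧
    ∀ Q : Finset V, (∀ u ∈ Q, ∀ w ∈ Q, u ≠ w → G.Adj u w) → ∑ v ∈ Q, x v ≤ 1}

/-- The imperfection ratio `imp(G) = min { t : QSTAB(G) ⊆ t · STAB(G) }`. -/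
noncomputable def impRatio {V : Type*} (G : SimpleGraph V) : ℝ :=
  sInf {t : ℝ | qstab G ⊆ t • stabPolytope G}

/-! A point `x` of `QSTAB(G)` restricts to a point of `QSTAB(G[V_i]) = STAB(G[V_i])`, so
`1_{V_i} x` lies in `STAB(G)`; as every vertex lies in exactly `q` of the `V_i`, averaging over
`i` gives `(q / p) x ∈ STAB(G)`.

That `QSTAB(H) ⊆ STAB(H)` for a perfect graph `H` follows from weighted colourings: if the
integer weights `w` sum to at most `n` on every clique, then `H` has `n` stable sets covering
each `v` exactly `w v` times, so `w / n ∈ STAB(H)`; rounding `n x` down and letting `n → ∞`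
finishes, since `STAB(H)` is closed. -/

open scoped Finset

section

variable {ι V M : Type*}

lemma sum_indicator_apply_eq_card_smul [Fintype ι] [AddCommMonoid M] (S : ι → Set V)
    (x : V → M) (v : V) [DecidablePred (v ∈ S ·)] :
    ∑ i, (S i).indicator x v = #{i | v ∈ S i} • x v := by
  simp [Set.indicator_apply, Finset.sum_ite]

lemma sum_indicator_one_eq_card_inter [DecidableEq V] (Q T : Finset V) :
    ∑ v ∈ Q, Set.indicator (T : Set V) 1 v = #(Q ∩ T) := by
  simp [Set.indicator_apply]

lemma mem_smul_of_indicator_mem_of_cover [Fintype ι] {C : Set (V → ℝ)}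
    (hC : Convex ℝ C) (h0 : (0 : V → ℝ) ∈ C) {q : ℕ} (hq : 0 < q) (S : ι → Set V)
    (hS : ∀ v, Nat.card {i // v ∈ S i} = q) {x : V → ℝ} (hx : ∀ i, (S i).indicator x ∈ C) :
    x ∈ ((Fintype.card ι : ℝ) / q) • C := by
  classical
  have hsum : ∑ i, (S i).indicator x = (q : ℝ) • x := by
    ext v
    rw [Finset.sum_apply, sum_indicator_apply_eq_card_smul, ← Fintype.card_subtype,
      ← Nat.card_eq_fintype_card, hS, Pi.smul_apply, Nat.cast_smul_eq_nsmul]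
  rcases isEmpty_or_nonempty ι with hι | hι
  · have hx0 : x = 0 := by
      simpa [hq.ne'] using hsum.symm
    simpa [hx0] using Set.zero_mem_smul_set h0
  · have hp : (0 : ℝ) < Fintype.card ι := by exact_mod_cast Fintype.card_pos
    have hmean : ∑ i, (Fintype.card ι : ℝ)⁻¹ • (S i).indicator x ∈ C :=
      hC.sum_mem (fun _ _ => by positivity) (by simp [hp.ne']) fun i _ => hx i
    convert Set.smul_mem_smul_set hmean using 1
    rw [← Finset.smul_sum, hsum, smul_smul, smul_smul,
      show (Fintype.card ι : ℝ) / q * (Fintype.card ι : ℝ)⁻¹ * q = 1 by field_simp, one_smul]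

end

namespace SimpleGraph

variable {V : Type*} [DecidableEq V] {G : SimpleGraph V}

def IsWeightedColoring (G : SimpleGraph V) (w : V → ℕ) {n : ℕ} (f : Fin n → Finset V) : Prop :=
  (∀ i, G.IsIndepSet (f i : Set V)) ∧ ∀ v, #{i | v ∈ f i} = w v

lemma IsWeightedColoring.cons {w : V → ℕ} {n : ℕ} {f : Fin n → Finset V}
    (hf : G.IsWeightedColoring w f) {T : Finset V} (hT : G.IsIndepSet (T : Set V)) :
    G.IsWeightedColoring (w + Set.indicator (T : Set V) 1) (Fin.cons T f) := by
  refine ⟨Fin.cases hT hf.1, fun v => ?_⟩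
  rw [Finset.card_filter, Fin.sum_univ_succ, ← Finset.card_filter]
  simp [hf.2 v, Set.indicator_apply, add_comm]

lemma IsWeightedColoring.indicator_le {w : V → ℕ} {n : ℕ} {f : Fin n → Finset V}
    (hf : G.IsWeightedColoring w f) (k : Fin n) : Set.indicator (f k : Set V) 1 ≤ w := by
  intro v
  by_cases hv : v ∈ f k
  · simpa [hv, ← hf.2 v] using ⟨k, by simpa using hv⟩
  · simp [hv]

lemma IsWeightedColoring.nonempty_inter_of_sum_eq {w : V → ℕ} {n : ℕ} {f : Fin n → Finset V}
    (hf : G.IsWeightedColoring w f) {Q : Finset V} (hQ : G.IsClique (Q : Set V))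
    (hQw : ∑ v ∈ Q, w v = n) (i : Fin n) : (Q ∩ f i).Nonempty := by
  have hle : ∀ j, #(Q ∩ f j) ≤ 1 := fun j =>
    Finset.card_le_one.2 fun a ha b hb => by
      simp only [Finset.mem_inter] at ha hb
      by_contra hab
      exact hf.1 j ha.2 hb.2 hab (hQ ha.1 hb.1 hab)
  have hsum : ∑ j, #(Q ∩ f j) = n := by
    calc ∑ j, #(Q ∩ f j) = ∑ j, ∑ v ∈ Q, if v ∈ f j then 1 else 0 := by
          simp only [← Finset.filter_mem_eq_inter, Finset.card_filter]
      _ = ∑ v ∈ Q, #{j | v ∈ f j} := by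
          rw [Finset.sum_comm]
          simp only [Finset.card_filter]
      _ = n := by simp only [hf.2, hQw]
  by_contra hi
  have hlt : ∑ j, #(Q ∩ f j) < ∑ _j : Fin n, 1 :=
    Finset.sum_lt_sum (fun j _ => hle j)
      ⟨i, Finset.mem_univ i, by simp [Finset.not_nonempty_iff_eq_empty.1 hi]⟩
  simp [hsum] at hlt

lemma IsPerfect.exists_isWeightedColoring_of_le_one [Finite V] (hG : G.IsPerfect)
    {w : V → ℕ} (hw1 : ∀ v, w v ≤ 1) {n : ℕ}
    (hwn : ∀ Q : Finset V, G.IsClique (Q : Set V) → ∑ v ∈ Q, w v ≤ n) :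
    ∃ f : Fin n → Finset V, G.IsWeightedColoring w f := by
  have := Fintype.ofFinite V
  set s : Set V := {v | w v = 1}
  have hω : (G.induce s).cliqueNum ≤ n := by
    obtain ⟨t, ht⟩ := (G.induce s).exists_isNClique_cliqueNum
    rw [isNClique_induce_iff] at ht
    calc (G.induce s).cliqueNum = ∑ v ∈ t.map (Function.Embedding.subtype _), w v := by
          rw [← ht.card_eq, Finset.card_eq_sum_ones]
          refine Finset.sum_congr rfl fun v hv => ?_
          obtain ⟨u, -, rfl⟩ := Finset.mem_map.1 hv
          exact u.2.symm
      _ ≤ n := hwn _ ht.isClique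
  obtain ⟨C⟩ : (G.induce s).Colorable n := by
    rw [← chromaticNumber_le_iff_colorable, hG s]
    exact_mod_cast hω
  refine ⟨fun i => {v | ∃ h : v ∈ s, C ⟨v, h⟩ = i}, fun i u hu v hv huv hadj => ?_, fun v => ?_⟩
  · simp only [Finset.coe_filter, Finset.mem_univ, true_and, Set.mem_ofPred_eq] at hu hv
    obtain ⟨hu, rfl⟩ := hu
    obtain ⟨hv, hCv⟩ := hv
    exact C.valid (v := ⟨u, hu⟩) (w := ⟨v, hv⟩) (by simpa using hadj) hCv.symm
  · by_cases hv : v ∈ s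
    · have : ({i | v ∈ ({v | ∃ h : v ∈ s, C ⟨v, h⟩ = i} : Finset V)} : Finset (Fin n)) =
          {C ⟨v, hv⟩} := by
        ext i
        simp [hv, eq_comm]
      rw [this, Finset.card_singleton]
      exact hv.symm
    · have : w v = 0 := by have : w v ≠ 1 := hv; have := hw1 v; omega
      simp [hv, this]

lemma sum_le_of_sum_indicator_add_le {w : V → ℕ} {T Q : Finset V} {m : ℕ}
    (hQ : ∑ v ∈ Q, (Set.indicator (T : Set V) 1 v + w v) ≤ m + 1)
    (hmeet : ∑ v ∈ Q, (Set.indicator (T : Set V) 1 v + w v) = m + 1 → (Q ∩ T).Nonempty) :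
    ∑ v ∈ Q, w v ≤ m := by
  simp only [Finset.sum_add_distrib, sum_indicator_one_eq_card_inter] at hQ hmeet
  rcases hQ.lt_or_eq with hlt | heq
  · omega
  · have := Finset.card_pos.2 (hmeet heq)
    omega

lemma IsWeightedColoring.nonempty_inter_of_sum_single_add_eq {w : V → ℕ} {n : ℕ}
    {f : Fin n → Finset V} (hf : G.IsWeightedColoring w f) {v₀ : V} {k : Fin n} (hk : v₀ ∈ f k)
    {Q : Finset V} (hQ : G.IsClique (Q : Set V))
    (hQw : ∑ v ∈ Q, (Set.indicator ({v₀} : Finset V) 1 v + w v) = n) : (Q ∩ f k).Nonempty := by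
  by_cases hv₀ : v₀ ∈ Q
  · exact ⟨v₀, Finset.mem_inter.2 ⟨hv₀, hk⟩⟩
  · refine hf.nonempty_inter_of_sum_eq hQ ?_ k
    simpa [Finset.sum_add_distrib, sum_indicator_one_eq_card_inter, hv₀] using hQw

theorem IsPerfect.exists_isWeightedColoring [Finite V] (hG : G.IsPerfect) (w : V → ℕ) (n : ℕ)
    (hwn : ∀ Q : Finset V, G.IsClique (Q : Set V) → ∑ v ∈ Q, w v ≤ n) :
    ∃ f : Fin n → Finset V, G.IsWeightedColoring w f := by
  have := Fintype.ofFinite V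
  induction hN : ∑ v, w v using Nat.strong_induction_on generalizing w n with
  | _ N ih =>
  by_cases hw1 : ∀ v, w v ≤ 1
  · exact hG.exists_isWeightedColoring_of_le_one hw1 hwn
  -- Colour `w` minus one unit at `v₀` with `n` colours and let `T` be a class through `v₀`.
  -- Every clique of weight `n` meets `T` (at `v₀`, or because a tight clique meets every
  -- class), so `w - 1_T` needs only `n - 1` colours, and `T` is added back as a class.
  obtain ⟨v₀, hv₀⟩ := not_forall.1 hw1
  obtain ⟨w', rfl⟩ : ∃ w', w = Set.indicator ({v₀} : Finset V) 1 + w' :=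
    le_iff_exists_add.1 fun v => by
      by_cases hv : v = v₀ <;> simp [hv]
      omega
  simp only [Pi.add_apply] at hwn hN
  have hw'v₀ : 0 < w' v₀ := by simpa [Nat.pos_iff_ne_zero] using hv₀
  obtain ⟨f, hf⟩ := ih _ (by simp [← hN, Finset.sum_add_distrib])
    w' n (fun Q hQ => (Finset.sum_le_sum fun _ _ => Nat.le_add_left _ _).trans (hwn Q hQ)) rfl
  obtain ⟨k, hk⟩ : ∃ k, v₀ ∈ f k := by
    obtain ⟨k, hk⟩ := Finset.card_pos.1 ((hf.2 v₀).symm ▸ hw'v₀ : 0 < #{i | v₀ ∈ f i})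
    exact ⟨k, (Finset.mem_filter.1 hk).2⟩
  obtain ⟨m, rfl⟩ : ∃ m, n = m + 1 := by
    have : 1 + w' v₀ ≤ n := by simpa using hwn {v₀} (by simp)
    exact ⟨n - 1, by omega⟩
  obtain ⟨w'', hw''⟩ : ∃ w'', Set.indicator ({v₀} : Finset V) 1 + w' =
      Set.indicator (f k : Set V) 1 + w'' :=
    le_iff_exists_add.1 ((hf.indicator_le k).trans le_add_self)
  have hw''v := congrFun hw''
  simp only [Pi.add_apply] at hw''v
  obtain ⟨g, hg⟩ := ih _ (by
      have := Finset.card_pos.2 ⟨v₀, hk⟩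
      rw [← hN, Finset.sum_congr rfl fun v _ => hw''v v, Finset.sum_add_distrib,
        sum_indicator_one_eq_card_inter, Finset.univ_inter]
      omega)
    w'' m (fun Q hQ => by
      simp only [hw''v] at hwn
      exact sum_le_of_sum_indicator_add_le (hwn Q hQ) fun h =>
        hf.nonempty_inter_of_sum_single_add_eq hk hQ (by simpa only [hw''v] using h)) rfl
  refine ⟨Fin.cons (f k) g, ?_⟩
  rw [hw'', add_comm]
  exact hg.cons (hf.1 k)

end SimpleGraph

section Polytopes

variable {V : Type*} {G : SimpleGraph V}

lemma indicator_mem_stabPolytope {s : Finset V} (hs : G.IsIndepSet (s : Set V)) :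
    Set.indicator (s : Set V) (fun _ => (1 : ℝ)) ∈ stabPolytope G :=
  subset_convexHull ℝ _ ⟨s, fun _ hu _ hw huw => hs hu hw (G.ne_of_adj huw) huw, rfl⟩

lemma convex_stabPolytope : Convex ℝ (stabPolytope G) :=
  convex_convexHull ℝ _

lemma zero_mem_stabPolytope : (0 : V → ℝ) ∈ stabPolytope G := by
  simpa [← Pi.zero_def] using indicator_mem_stabPolytope (G := G) (s := ∅) (by simp)

lemma isClosed_stabPolytope [Finite V] : IsClosed (stabPolytope G) := by
  refine ((Set.finite_range fun s : Finset V =>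
    Set.indicator (s : Set V) (fun _ => (1 : ℝ))).subset ?_).isClosed_convexHull (𝕜 := ℝ)
  rintro x ⟨s, -, rfl⟩
  exact ⟨s, rfl⟩

lemma SimpleGraph.IsWeightedColoring.div_mem_stabPolytope [DecidableEq V] {w : V → ℕ} {n : ℕ}
    (hn : 0 < n) {f : Fin n → Finset V} (hf : G.IsWeightedColoring w f) :
    (fun v => (w v : ℝ) / n) ∈ stabPolytope G := by
  have hmean : ∑ i, (n : ℝ)⁻¹ • Set.indicator (f i : Set V) (fun _ => (1 : ℝ)) ∈
      stabPolytope G :=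
    convex_stabPolytope.sum_mem (fun _ _ => by positivity) (by simp [hn.ne'])
      fun i _ => indicator_mem_stabPolytope (hf.1 i)
  convert hmean using 1
  ext v
  rw [← Finset.smul_sum, Pi.smul_apply, Finset.sum_apply, sum_indicator_apply_eq_card_smul]
  simp [hf.2 v, div_eq_inv_mul]

lemma sum_floor_mul_le_of_mem_qstab {x : V → ℝ} (hx : x ∈ qstab G) {Q : Finset V}
    (hQ : G.IsClique (Q : Set V)) (n : ℕ) : ∑ v ∈ Q, ⌊x v * n⌋₊ ≤ n := by
  rw [← Nat.cast_le (α := ℝ)]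
  calc ((∑ v ∈ Q, ⌊x v * n⌋₊ : ℕ) : ℝ) ≤ ∑ v ∈ Q, x v * n := by
        push_cast
        exact Finset.sum_le_sum fun v _ => Nat.floor_le (mul_nonneg (hx.1 v) n.cast_nonneg)
    _ = (∑ v ∈ Q, x v) * n := (Finset.sum_mul ..).symm
    _ ≤ 1 * n := mul_le_mul_of_nonneg_right (hx.2 Q hQ) n.cast_nonneg
    _ = n := one_mul _

open Filter Topology in
theorem SimpleGraph.IsPerfect.qstab_subset_stabPolytope [Finite V] (hG : G.IsPerfect) :
    qstab G ⊆ stabPolytope G := by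
  classical
  intro x hx
  have hmem : ∀ n : ℕ, 0 < n → (fun v => (⌊x v * n⌋₊ : ℝ) / n) ∈ stabPolytope G := by
    intro n hn
    obtain ⟨f, hf⟩ := hG.exists_isWeightedColoring (fun v => ⌊x v * n⌋₊) n
      fun Q hQ => sum_floor_mul_le_of_mem_qstab hx hQ n
    exact hf.div_mem_stabPolytope hn
  have hlim : Tendsto (fun n : ℕ => fun v => (⌊x v * n⌋₊ : ℝ) / n) atTop (𝓝 x) :=
    tendsto_pi_nhds.2 fun v =>
      (tendsto_nat_floor_mul_div_atTop (hx.1 v)).comp tendsto_natCast_atTop_atTop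
  exact isClosed_stabPolytope.mem_of_tendsto hlim ((eventually_gt_atTop 0).mono hmem)

lemma comp_subtypeVal_mem_qstab_induce {x : V → ℝ} (hx : x ∈ qstab G) (s : Set V) :
    x ∘ Subtype.val ∈ qstab (G.induce s) := by
  refine ⟨fun u => hx.1 u, fun Q hQ => ?_⟩
  simpa using hx.2 (Q.map (Function.Embedding.subtype _)) (by simpa using hQ)

lemma extend_subtypeVal_eq_indicator {s : Set V} (x : V → ℝ) :
    Function.extend (Subtype.val : s → V) (x ∘ Subtype.val) 0 = s.indicator x := by
  ext v
  by_cases hv : v ∈ s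
  · lift v to s using hv
    simp
  · rw [Function.extend_apply' _ _ _ (by simpa using hv)]
    simp [hv]

lemma extend_subtypeVal_indicator_one {s : Set V} (t : Finset s) :
    Function.extend Subtype.val (Set.indicator (t : Set s) fun _ => (1 : ℝ)) 0 =
      Set.indicator (t.map (Function.Embedding.subtype _) : Set V) fun _ => 1 := by
  ext v
  by_cases hv : v ∈ s
  · lift v to s using hv
    rw [Subtype.val_injective.extend_apply, Finset.coe_map, Function.Embedding.coe_subtype,
      Set.indicator_image Subtype.val_injective]
    rfl
  · rw [Function.extend_apply' _ _ _ (by simpa using hv)]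
    simp [hv]

lemma extend_subtypeVal_mem_stabPolytope {s : Set V} {y : s → ℝ}
    (hy : y ∈ stabPolytope (G.induce s)) :
    Function.extend Subtype.val y 0 ∈ stabPolytope G := by
  have hgen : Function.ExtendByZero.linearMap ℝ (Subtype.val : s → V) ''
      {y | ∃ t : Finset s, (∀ u ∈ t, ∀ w ∈ t, ¬ (G.induce s).Adj u w) ∧
        y = Set.indicator (t : Set s) fun _ => (1 : ℝ)} ⊆
      {x | ∃ t : Finset V, (∀ u ∈ t, ∀ w ∈ t, ¬ G.Adj u w) ∧
        x = Set.indicator (t : Set V) fun _ => (1 : ℝ)} := by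
    rintro _ ⟨_, ⟨t, ht, rfl⟩, rfl⟩
    refine ⟨t.map (Function.Embedding.subtype _), ?_, extend_subtypeVal_indicator_one t⟩
    simpa using ht
  have hmap := Set.mem_image_of_mem (Function.ExtendByZero.linearMap ℝ (Subtype.val : s → V)) hy
  rw [stabPolytope, LinearMap.image_convexHull] at hmap
  exact convexHull_mono hgen hmap

lemma indicator_mem_stabPolytope_of_isPerfect_induce [Finite V] {s : Set V}
    (hs : (G.induce s).IsPerfect) {x : V → ℝ} (hx : x ∈ qstab G) :
    s.indicator x ∈ stabPolytope G := by
  rw [← extend_subtypeVal_eq_indicator]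
  exact extend_subtypeVal_mem_stabPolytope
    (hs.qstab_subset_stabPolytope (comp_subtypeVal_mem_qstab_induce hx s))

lemma impRatio_le_of_qstab_subset {t : ℝ} (ht : 0 ≤ t) (h : qstab G ⊆ t • stabPolytope G) :
    impRatio G ≤ t := by
  -- a set of reals that is not bounded below has `sInf = 0`
  by_cases hbdd : BddBelow {t : ℝ | qstab G ⊆ t • stabPolytope G}
  · exact csInf_le hbdd h
  · rw [impRatio, Real.sInf_of_not_bddBelow hbdd]
    exact ht

end Polytopes

/-- If every vertex of `G` is covered exactly `q` times by a family of `p` induced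
perfect subgraphs of `G`, then the imperfection ratio of `G` is at most `p / q`. -/
theorem stmt10 {V : Type*} [Fintype V] (G : SimpleGraph V) (p q : ℕ) (hq : 0 < q)
    (Vs : Fin p → Set V) (hperf : ∀ i, (G.induce (Vs i)).IsPerfect)
    (hcov : ∀ v : V, Nat.card {i : Fin p // v ∈ Vs i} = q) :
    impRatio G ≤ (p : ℝ) / q := by
  refine impRatio_le_of_qstab_subset (by positivity) fun x hx => ?_
  simpa using mem_smul_of_indicator_mem_of_cover convex_stabPolytope zero_mem_stabPolytope
    hq Vs hcov fun i => indicator_mem_stabPolytope_of_isPerfect_induce (hperf i) hx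
end

section
/- In the enhanced conflict graph of any multicast switch traffic pattern, every maximal clique consists of vertices representing subflows that all start at the same input, or all end at the same output. Consequently, if a nonnegative rate vector r is admissible (total rate at each input and each output at most 1), then its enhanced rate vector e(r) satisfies all clique inequalities, i.e., e(r) ∈ QSTAB(G). -/
/-- A subflow: an input, a (finite) fanout set of outputs, and an output in the
fanout. -/
structure SF (I O : Type*) where
  inp : I
  fanout : Finset O
  out : O
  mem : out ∈ fanout

/-- The enhanced conflict graph on subflows: two distinct subflows are adjacent
iff they have the same output, or the same input but different fanout sets. -/
def ecg (I O : Type*) : SimpleGraph (SF I O) where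
  Adj a b := a ≠ b ∧ (a.out = b.out ∨ (a.inp = b.inp ∧ a.fanout ≠ b.fanout))
  symm := by
    constructor
    rintro a b ⟨hne, h | ⟨h1, h2⟩⟩
    · exact ⟨hne.symm, Or.inl h.symm⟩
    · exact ⟨hne.symm, Or.inr ⟨h1.symm, h2.symm⟩⟩
  loopless := by constructor; rintro a ⟨hne, _⟩; exact hne rfl

/-!
Two distinct subflows of a clique with different outputs must share their input. Any third
subflow with another input is then adjacent to both only through a common output, which is
impossible; so a clique has a common input or a common output. A clique with common input `i`
has pairwise distinct fanout sets (subflows with equal input and fanout are adjacent only if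
they share the output, and are then equal), so its rates sum to at most the load of input `i`.
A clique with common output `j` consists of subflows determined by their flow `(i, J)` with
`j ∈ J`, so its rates sum to at most the load of output `j`.
-/

open Finset

namespace SF

variable {I O : Type*}

theorem ext {a b : SF I O} (hinp : a.inp = b.inp) (hfanout : a.fanout = b.fanout)
    (hout : a.out = b.out) : a = b := by
  cases a; cases b; simp_all

theorem inp_eq_or_out_eq_of_clique (C : Set (SF I O))
    (hC : ∀ a ∈ C, ∀ b ∈ C, a ≠ b → (ecg I O).Adj a b) :
    (∀ a ∈ C, ∀ b ∈ C, a.inp = b.inp) ∨ (∀ a ∈ C, ∀ b ∈ C, a.out = b.out) := by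
  by_contra! h
  obtain ⟨⟨c, hc, d, hd, hcd⟩, ⟨a, ha, b, hb, hab⟩⟩ := h
  have out_eq_of_inp_ne : ∀ x ∈ C, ∀ y ∈ C, x.inp ≠ y.inp → x.out = y.out := by
    intro x hx y hy hxy
    obtain ⟨-, hout | ⟨hinp, -⟩⟩ := hC x hx y hy (fun h => hxy (h ▸ rfl))
    exacts [hout, absurd hinp hxy]
  have hinp : a.inp = b.inp := by
    by_contra hne
    exact hab (out_eq_of_inp_ne a ha b hb hne)
  obtain ⟨x, hx, hxa⟩ : ∃ x ∈ C, x.inp ≠ a.inp := by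
    by_cases hca : c.inp = a.inp
    · exact ⟨d, hd, fun hda => hcd (hca.trans hda.symm)⟩
    · exact ⟨c, hc, hca⟩
  exact hab ((out_eq_of_inp_ne x hx a ha hxa).symm.trans
    (out_eq_of_inp_ne x hx b hb (hinp ▸ hxa)))

theorem sum_rate_le_of_inp_eq [Fintype O] (r : I → Finset O → ℝ) (hr : ∀ i J, 0 ≤ r i J)
    (hin : ∀ i : I, ∑ J : Finset O, r i J ≤ 1) (Q : Finset (SF I O))
    (hQ : ∀ u ∈ Q, ∀ w ∈ Q, u ≠ w → (ecg I O).Adj u w) (i : I)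
    (hi : ∀ v ∈ Q, v.inp = i) : ∑ v ∈ Q, r v.inp v.fanout ≤ 1 := by
  classical
  have hinj : Set.InjOn SF.fanout (Q : Set (SF I O)) := by
    intro x hx y hy hxy
    by_contra hne
    obtain ⟨-, hout | ⟨-, hfanout⟩⟩ := hQ x hx y hy hne
    exacts [hne (ext ((hi x hx).trans (hi y hy).symm) hxy hout), hfanout hxy]
  calc ∑ v ∈ Q, r v.inp v.fanout = ∑ v ∈ Q, r i v.fanout :=
        sum_congr rfl fun v hv => by rw [hi v hv]
    _ = ∑ J ∈ Q.image SF.fanout, r i J := (sum_image fun x hx y hy => hinj hx hy).symm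
    _ ≤ ∑ J : Finset O, r i J :=
        sum_le_sum_of_subset_of_nonneg (subset_univ _) fun J _ _ => hr i J
    _ ≤ 1 := hin i

theorem sum_rate_le_of_out_eq [Fintype I] [Fintype O] [DecidableEq O]
    (r : I → Finset O → ℝ) (hr : ∀ i J, 0 ≤ r i J)
    (hout : ∀ j : O, ∑ i : I, ∑ J ∈ univ.filter (fun J : Finset O => j ∈ J), r i J ≤ 1)
    (Q : Finset (SF I O)) (j : O) (hj : ∀ v ∈ Q, v.out = j) :
    ∑ v ∈ Q, r v.inp v.fanout ≤ 1 := by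
  classical
  have hinj : Set.InjOn (fun v : SF I O => (v.inp, v.fanout)) Q := by
    intro x hx y hy hxy
    obtain ⟨hinp, hfanout⟩ := Prod.mk.inj hxy
    exact ext hinp hfanout ((hj x hx).trans (hj y hy).symm)
  have hsub : Q.image (fun v => (v.inp, v.fanout)) ⊆
      univ ×ˢ univ.filter (fun J : Finset O => j ∈ J) := by
    intro p hp
    obtain ⟨v, hv, rfl⟩ := mem_image.mp hp
    simpa [← hj v hv] using v.mem
  calc ∑ v ∈ Q, r v.inp v.fanout
        = ∑ p ∈ Q.image (fun v => (v.inp, v.fanout)), r p.1 p.2 := by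
        rw [sum_image fun x hx y hy => hinj hx hy]
    _ ≤ ∑ p ∈ univ ×ˢ univ.filter (fun J : Finset O => j ∈ J), r p.1 p.2 :=
        sum_le_sum_of_subset_of_nonneg hsub fun p _ _ => hr p.1 p.2
    _ = ∑ i : I, ∑ J ∈ univ.filter (fun J : Finset O => j ∈ J), r i J := sum_product _ _ _
    _ ≤ 1 := hout j

end SF

/-- Every clique of the enhanced conflict graph consists of subflows all from the
same input or all to the same output; consequently, any nonnegative admissible
rate vector has its enhanced rate vector in `QSTAB` of the enhanced conflict
graph. -/
theorem stmt14 {I O : Type*} [Fintype I] [Fintype O] [DecidableEq O]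
    (r : I → Finset O → ℝ) (hr : ∀ i J, 0 ≤ r i J)
    (hin : ∀ i : I, ∑ J : Finset O, r i J ≤ 1)
    (hout : ∀ j : O, ∑ i : I, ∑ J ∈ Finset.univ.filter (fun J : Finset O => j ∈ J), r i J ≤ 1) :
    (∀ C : Set (SF I O), (∀ a ∈ C, ∀ b ∈ C, a ≠ b → (ecg I O).Adj a b) →
      ((∀ a ∈ C, ∀ b ∈ C, a.inp = b.inp) ∨ (∀ a ∈ C, ∀ b ∈ C, a.out = b.out))) ∧
    (fun v : SF I O => r v.inp v.fanout) ∈ qstab (ecg I O) := by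
  refine ⟨SF.inp_eq_or_out_eq_of_clique, fun v => hr _ _, fun Q hQ => ?_⟩
  rcases Q.eq_empty_or_nonempty with rfl | ⟨a, ha⟩
  · simp
  rcases SF.inp_eq_or_out_eq_of_clique (Q : Set (SF I O)) hQ with hinp | hout'
  · exact SF.sum_rate_le_of_inp_eq r hr hin Q hQ a.inp fun v hv => hinp v hv a ha
  · exact SF.sum_rate_le_of_out_eq r hr hout Q a.out fun v hv => hout' v hv a ha
end

section
/- For the 2×N traffic pattern with one broadcast of rate r_0 from input 1 and unicasts of rates r_1,...,r_N from input 2 to outputs 1,...,N, served with fanout splitting but no coding, the rate vector is achievable if and only if: r_i ≥ 0 for all i; Σ_{i=1}^N r_i ≤ 1; r_0 + r_i ≤ 1 for each i; and 2r_0 + Σ_{i=1}^N r_i ≤ 2. -/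
/-!
Necessity is double counting over the `F` slots of a frame. Each slot serves at most one
unicast, which gives `Σ rᵢ ≤ 1`. Every broadcast packet needs its own slot that does not serve
output `i`, which gives `r0 + rᵢ ≤ 1`. Give an idle slot weight 2 and a unicast slot weight 1:
a packet sent only in unicast slots needs two of them, serving different outputs, so every
packet collects weight at least 2, which gives `2 r0 + Σ rᵢ ≤ 2`.

For sufficiency, clear denominators so that the rates become integers `a0, aᵢ` over `F` slots.
Lay the unicasts out in consecutive blocks from slot 0 on and put `d = F - a0`. Send packet `p`
in slot `d + p`, and again in slot `p`, each time to every output that the slot does not serve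
by unicast. Every block has length `aᵢ ≤ d`, so slots `p` and `d + p` never serve the same
output. Since `Σ aᵢ ≤ 2d`, slot `d + p` can serve a unicast only if `p < d`, so the copy in
slot `p` is available when it is needed.
-/

/-- Achievability, with fanout splitting but no coding, of the `2 × N` traffic
pattern with one broadcast of rate `r0` from input 1 and unicasts of rates
`r j` from input 2 to each output `j`.  There is a frame of `F` slots; in each
slot `t`, input 2 serves at most one unicast output (`A t`) and input 1 may send
one broadcast packet `p` to a set `S` of outputs not currently occupied by
input 2 (`B t = some (p, S)`).  Each unicast `j` must be served in at least
`r j · F` slots, and at least `r0 · F` broadcast packets must each be delivered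
to every output (possibly over several slots, i.e. with fanout splitting, but
each packet is sent uncoded). -/
def Achievable2N (N : ℕ) (r0 : ℝ) (r : Fin N → ℝ) : Prop :=
  ∃ F : ℕ, 0 < F ∧
    ∃ (A : Fin F → Option (Fin N)) (B : Fin F → Option (ℕ × Finset (Fin N))),
      (∀ t p S, B t = some (p, S) → ∀ j ∈ S, A t ≠ some j) ∧
      (∀ j : Fin N,
        r j * F ≤ ((Finset.univ.filter (fun t => A t = some j)).card : ℝ)) ∧
      ∃ m : ℕ, r0 * F ≤ (m : ℝ) ∧
        ∀ p < m, ∀ j : Fin N, ∃ t S, B t = some (p, S) ∧ j ∈ S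

open Finset

theorem Finset.card_mul_le_sum_of_pairwiseDisjoint {ι α : Type*} [Fintype α] [DecidableEq α]
    {s : Finset ι} {T : ι → Finset α} (hT : (s : Set ι).PairwiseDisjoint T) (w : α → ℕ)
    {k : ℕ} (hk : ∀ i ∈ s, k ≤ ∑ a ∈ T i, w a) : #s * k ≤ ∑ a, w a :=
  calc #s * k = #s • k := rfl
    _ ≤ ∑ i ∈ s, ∑ a ∈ T i, w a := card_nsmul_le_sum s _ k hk
    _ = ∑ a ∈ s.biUnion T, w a := (sum_biUnion hT).symm
    _ ≤ ∑ a, w a := sum_le_sum_of_subset (subset_univ _)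

def WithinCapacity {R ι : Type*} [Semiring R] [LE R] [Fintype ι] (c r0 : R) (r : ι → R) :
    Prop :=
  ∑ i, r i ≤ c ∧ (∀ i, r0 + r i ≤ c) ∧ 2 * r0 + ∑ i, r i ≤ 2 * c

section WithinCapacity

variable {R ι : Type*} [Fintype ι]

theorem WithinCapacity.mono [Semiring R] [PartialOrder R] [IsOrderedRing R]
    {c r0 r0' : R} {r r' : ι → R} (h : WithinCapacity c r0 r) (h0 : r0' ≤ r0)
    (hr : ∀ i, r' i ≤ r i) : WithinCapacity c r0' r' := by
  obtain ⟨hsum, hpair, htwo⟩ := h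
  have hsum' : ∑ i, r' i ≤ ∑ i, r i := sum_le_sum fun i _ => hr i
  refine ⟨hsum'.trans hsum, fun i => (add_le_add h0 (hr i)).trans (hpair i), ?_⟩
  exact (add_le_add (mul_le_mul_of_nonneg_left h0 zero_le_two) hsum').trans htwo

theorem withinCapacity_natCast_iff [Semiring R] [PartialOrder R] [IsStrictOrderedRing R]
    {c r0 : ℕ} {r : ι → ℕ} :
    WithinCapacity (c : R) (r0 : R) (fun i => (r i : R)) ↔ WithinCapacity c r0 r := by
  simp only [WithinCapacity]
  norm_cast

theorem withinCapacity_mul_right_iff [Semiring R] [LinearOrder R] [IsStrictOrderedRing R]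
    {c r0 F : R} {r : ι → R} (hF : 0 < F) :
    WithinCapacity (c * F) (r0 * F) (fun i => r i * F) ↔ WithinCapacity c r0 r := by
  simp only [WithinCapacity, ← sum_mul, ← add_mul, ← mul_assoc,
    mul_le_mul_iff_of_pos_right hF]

end WithinCapacity

theorem exists_pos_nat_mul_eq_natCast {ι : Type*} [Fintype ι] {x : ι → ℝ}
    (hq : ∀ i, ∃ q : ℚ, x i = q) (hx : ∀ i, 0 ≤ x i) :
    ∃ D : ℕ, 0 < D ∧ ∀ i, ∃ n : ℕ, x i * D = n := by
  choose q hq using hq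
  refine ⟨∏ i, (q i).den, prod_pos fun i _ => (q i).den_pos, fun i => ?_⟩
  obtain ⟨e, he⟩ : (q i).den ∣ ∏ i, (q i).den := dvd_prod_of_mem _ (mem_univ i)
  have hnum : ((q i).num.toNat : ℝ) = (q i).num := by
    exact_mod_cast Int.toNat_of_nonneg (Rat.num_nonneg.2 (by exact_mod_cast hq i ▸ hx i))
  have hden : (q i : ℝ) * (q i).den = (q i).num := by exact_mod_cast Rat.mul_den_eq_num (q i)
  refine ⟨(q i).num.toNat * e, ?_⟩
  rw [he, hq i, Nat.cast_mul, Nat.cast_mul, hnum, ← mul_assoc, hden]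

section Schedule

variable {N F : ℕ}

def unicastSlots (A : Fin F → Option (Fin N)) (j : Fin N) : Finset (Fin F) :=
  univ.filter fun t => A t = some j

def packetSlots (B : Fin F → Option (ℕ × Finset (Fin N))) (p : ℕ) : Finset (Fin F) :=
  univ.filter fun t => (B t).map Prod.fst = some p

def CollisionFree (A : Fin F → Option (Fin N)) (B : Fin F → Option (ℕ × Finset (Fin N))) :
    Prop :=
  ∀ t p S, B t = some (p, S) → ∀ j ∈ S, A t ≠ some j

def DeliversAll (B : Fin F → Option (ℕ × Finset (Fin N))) (m : ℕ) : Prop :=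
  ∀ p < m, ∀ j : Fin N, ∃ t S, B t = some (p, S) ∧ j ∈ S

variable {A : Fin F → Option (Fin N)} {B : Fin F → Option (ℕ × Finset (Fin N))} {m : ℕ}

theorem mem_packetSlots_of_eq_some {t : Fin F} {p : ℕ} {S : Finset (Fin N)}
    (h : B t = some (p, S)) : t ∈ packetSlots B p := by
  simp [packetSlots, h]

theorem pairwiseDisjoint_packetSlots (s : Set ℕ) : s.PairwiseDisjoint (packetSlots B) :=
  fun _ _ _ _ hpq =>
    disjoint_filter.2 fun _ _ h h' => hpq (Option.some_injective _ (h.symm.trans h'))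

theorem sum_card_unicastSlots (A : Fin F → Option (Fin N)) :
    ∑ j, #(unicastSlots A j) = ∑ t, if A t = none then 0 else 1 := by
  simp only [unicastSlots, card_filter]
  rw [sum_comm]
  refine sum_congr rfl fun t _ => ?_
  cases A t <;> simp

theorem sum_card_unicastSlots_le (A : Fin F → Option (Fin N)) :
    ∑ j, #(unicastSlots A j) ≤ F := by
  rw [sum_card_unicastSlots]
  calc ∑ t : Fin F, (if A t = none then 0 else 1) ≤ ∑ _t : Fin F, 1 :=
        sum_le_sum fun t _ => by split_ifs <;> simp
    _ = F := by simp

theorem add_card_unicastSlots_le (hcol : CollisionFree A B) (hdel : DeliversAll B m)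
    (j : Fin N) : m + #(unicastSlots A j) ≤ F := by
  let w : Fin F → ℕ := fun t => if A t = some j then 0 else 1
  have hw : ∑ t, w t + #(unicastSlots A j) = F := by
    simp only [w, unicastSlots, card_filter, ← sum_add_distrib]
    calc ∑ t : Fin F, ((if A t = some j then 0 else 1) + if A t = some j then 1 else 0)
        = ∑ _t : Fin F, 1 := sum_congr rfl fun t _ => by split_ifs <;> rfl
      _ = F := by simp
  have hpacket : ∀ p ∈ range m, 1 ≤ ∑ t ∈ packetSlots B p, w t := by
    intro p hp
    obtain ⟨t, S, hB, hj⟩ := hdel p (mem_range.1 hp) j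
    calc 1 = w t := by simp [w, hcol t p S hB j hj]
      _ ≤ ∑ t ∈ packetSlots B p, w t :=
          single_le_sum (by simp) (mem_packetSlots_of_eq_some hB)
  have := card_mul_le_sum_of_pairwiseDisjoint (pairwiseDisjoint_packetSlots _) w hpacket
  rw [card_range, mul_one] at this
  omega

theorem two_mul_add_sum_card_unicastSlots_le (hN : 0 < N) (hcol : CollisionFree A B)
    (hdel : DeliversAll B m) : 2 * m + ∑ j, #(unicastSlots A j) ≤ 2 * F := by
  let w : Fin F → ℕ := fun t => if A t = none then 2 else 1
  have hw : ∑ t, w t + ∑ j, #(unicastSlots A j) = 2 * F := by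
    rw [sum_card_unicastSlots, ← sum_add_distrib]
    calc ∑ t : Fin F, (w t + if A t = none then 0 else 1)
        = ∑ _t : Fin F, 2 := sum_congr rfl fun t _ => by simp only [w]; split_ifs <;> rfl
      _ = 2 * F := by simp [mul_comm]
  have hpacket : ∀ p ∈ range m, 2 ≤ ∑ t ∈ packetSlots B p, w t := by
    intro p hp
    obtain ⟨t₀, S₀, hB₀, -⟩ := hdel p (mem_range.1 hp) ⟨0, hN⟩
    cases hA₀ : A t₀ with
    | none =>
      calc 2 = w t₀ := by simp [w, hA₀]
        _ ≤ ∑ t ∈ packetSlots B p, w t :=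
            single_le_sum (by simp) (mem_packetSlots_of_eq_some hB₀)
    | some j =>
      obtain ⟨t₁, S₁, hB₁, hj⟩ := hdel p (mem_range.1 hp) j
      have hne : t₀ ≠ t₁ := fun h => hcol t₁ p S₁ hB₁ j hj (h ▸ hA₀)
      calc 2 ≤ w t₀ + w t₁ := by simp only [w]; split_ifs <;> simp
        _ = ∑ t ∈ {t₀, t₁}, w t := (sum_pair hne).symm
        _ ≤ ∑ t ∈ packetSlots B p, w t := sum_le_sum_of_subset
            (insert_subset (mem_packetSlots_of_eq_some hB₀)
              (singleton_subset_iff.2 (mem_packetSlots_of_eq_some hB₁)))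
  have := card_mul_le_sum_of_pairwiseDisjoint (pairwiseDisjoint_packetSlots _) w hpacket
  rw [card_range] at this
  omega

theorem withinCapacity_of_deliversAll (hN : 0 < N) (hcol : CollisionFree A B)
    (hdel : DeliversAll B m) : WithinCapacity F m fun j => #(unicastSlots A j) :=
  ⟨sum_card_unicastSlots_le A, add_card_unicastSlots_le hcol hdel,
    two_mul_add_sum_card_unicastSlots_le hN hcol hdel⟩

end Schedule

section Construction

variable {N F : ℕ}

def blockSchedule (a : Fin N → ℕ) (F : ℕ) (t : Fin F) : Option (Fin N) :=
  if h : (t : ℕ) < ∑ i, a i then some (finSigmaFinEquiv.symm ⟨t, h⟩).1 else none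

variable {a : Fin N → ℕ}

theorem blockSchedule_finSigmaFinEquiv (ha : ∑ i, a i ≤ F) (j : Fin N) (k : Fin (a j)) :
    blockSchedule a F ⟨finSigmaFinEquiv ⟨j, k⟩, (finSigmaFinEquiv ⟨j, k⟩).2.trans_le ha⟩ =
      some j := by
  rw [blockSchedule, dif_pos (finSigmaFinEquiv ⟨j, k⟩).2]
  simp only [Fin.eta, Equiv.symm_apply_apply]

theorem exists_finSigmaFinEquiv_eq_of_blockSchedule_eq {t : Fin F} {j : Fin N}
    (h : blockSchedule a F t = some j) :
    ∃ k : Fin (a j), (finSigmaFinEquiv ⟨j, k⟩ : ℕ) = t := by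
  unfold blockSchedule at h
  split_ifs at h with ht
  obtain ⟨⟨i, k⟩, hx⟩ : ∃ x, finSigmaFinEquiv x = ⟨t, ht⟩ := finSigmaFinEquiv.surjective _
  rw [← hx, Equiv.symm_apply_apply, Option.some_inj] at h
  subst h
  exact ⟨k, congrArg Fin.val hx⟩

theorem lt_sum_of_blockSchedule_eq_some {t : Fin F} {j : Fin N}
    (h : blockSchedule a F t = some j) : (t : ℕ) < ∑ i, a i := by
  unfold blockSchedule at h
  split_ifs at h with ht
  exact ht

theorem lt_add_of_blockSchedule_eq_some {t t' : Fin F} {j : Fin N}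
    (h : blockSchedule a F t = some j) (h' : blockSchedule a F t' = some j) :
    (t' : ℕ) < t + a j := by
  obtain ⟨k, hk⟩ := exists_finSigmaFinEquiv_eq_of_blockSchedule_eq h
  obtain ⟨k', hk'⟩ := exists_finSigmaFinEquiv_eq_of_blockSchedule_eq h'
  rw [← hk, ← hk']
  simp only [finSigmaFinEquiv_apply]
  omega

theorem le_card_unicastSlots_blockSchedule (ha : ∑ i, a i ≤ F) (j : Fin N) :
    a j ≤ #(unicastSlots (blockSchedule a F) j) := by
  calc a j = #(univ : Finset (Fin (a j))) := by simp
    _ ≤ _ := card_le_card_of_injOn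
        (fun k => ⟨finSigmaFinEquiv ⟨j, k⟩, (finSigmaFinEquiv ⟨j, k⟩).2.trans_le ha⟩)
        (fun k _ =>
          mem_coe.2 (mem_filter.2 ⟨mem_univ _, blockSchedule_finSigmaFinEquiv ha j k⟩))
        (fun k _ k' _ h => by
          simpa using finSigmaFinEquiv.injective (Fin.ext (Fin.mk.inj_iff.1 h)))

theorem exists_deliversAll (A : Fin F → Option (Fin N)) {a0 : ℕ} (ha0 : a0 ≤ F)
    (hlow : ∀ t j, A t = some j → (t : ℕ) < 2 * (F - a0))
    (hgap : ∀ t t' j, A t = some j → A t' = some j → (t' : ℕ) < t + (F - a0)) :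
    ∃ B, CollisionFree A B ∧ DeliversAll B a0 := by
  let packet : Fin F → ℕ := fun t => if F - a0 ≤ t then t - (F - a0) else t
  let B : Fin F → Option (ℕ × Finset (Fin N)) := fun t =>
    some (packet t, univ \ (A t).toFinset)
  have hB : ∀ t j, A t ≠ some j → ∃ S, B t = some (packet t, S) ∧ j ∈ S :=
    fun t j hj => ⟨_, rfl, by simpa [Option.mem_def] using hj⟩
  refine ⟨B, fun t p S h j hj => ?_, fun p hp j => ?_⟩
  · simp only [B, Option.some_inj, Prod.mk.injEq] at h
    simpa [← h.2, Option.mem_def] using hj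
  · let t₁ : Fin F := ⟨F - a0 + p, by omega⟩
    by_cases h₁ : A t₁ = some j
    · have hp' : p < F - a0 := by have := hlow t₁ j h₁; simp only [t₁] at this; omega
      let t₀ : Fin F := ⟨p, by omega⟩
      have h₀ : A t₀ ≠ some j := fun h₀ => by
        have := hgap t₀ t₁ j h₀ h₁
        simp only [t₀, t₁] at this
        omega
      have hpacket : packet t₀ = p := by simp only [packet, t₀]; split_ifs <;> omega
      obtain ⟨S, hS, hjS⟩ := hB t₀ j h₀
      exact ⟨t₀, S, hpacket ▸ hS, hjS⟩
    · have hpacket : packet t₁ = p := by simp only [packet, t₁]; split_ifs <;> omega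
      obtain ⟨S, hS, hjS⟩ := hB t₁ j h₁
      exact ⟨t₁, S, hpacket ▸ hS, hjS⟩

theorem exists_schedule_of_withinCapacity {a0 : ℕ} (h : WithinCapacity F a0 a) :
    ∃ (A : Fin F → Option (Fin N)) (B : Fin F → Option (ℕ × Finset (Fin N))),
      CollisionFree A B ∧ (∀ j, a j ≤ #(unicastSlots A j)) ∧ DeliversAll B a0 := by
  obtain ⟨hsum, hpair, htwo⟩ := h
  obtain ⟨B, hcol, hdel⟩ := exists_deliversAll (blockSchedule a F) (a0 := a0) (by omega)
    (fun t j ht => by have := lt_sum_of_blockSchedule_eq_some ht; omega)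
    (fun t t' j ht ht' => by
      have := lt_add_of_blockSchedule_eq_some ht ht'
      have := hpair j
      omega)
  exact ⟨_, B, hcol, le_card_unicastSlots_blockSchedule hsum, hdel⟩

end Construction

theorem Achievable2N.withinCapacity {N : ℕ} {r0 : ℝ} {r : Fin N → ℝ} (hN : 0 < N)
    (h : Achievable2N N r0 r) : WithinCapacity 1 r0 r := by
  obtain ⟨F, hF, A, B, hcol, hA, m, hm, hdel⟩ := h
  have hcap :=
    withinCapacity_natCast_iff (R := ℝ) |>.2 (withinCapacity_of_deliversAll hN hcol hdel)
  refine (withinCapacity_mul_right_iff (Nat.cast_pos.2 hF)).1 ?_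
  rw [one_mul]
  exact hcap.mono hm hA

theorem achievable2N_of_withinCapacity {N : ℕ} {r0 : ℝ} {r : Fin N → ℝ}
    (hq0 : ∃ q : ℚ, r0 = q) (hq : ∀ i, ∃ q : ℚ, r i = q) (h0 : 0 ≤ r0) (hpos : ∀ i, 0 ≤ r i)
    (h : WithinCapacity 1 r0 r) : Achievable2N N r0 r := by
  obtain ⟨D, hD, ha⟩ :=
    exists_pos_nat_mul_eq_natCast (x := fun o : Option (Fin N) => o.elim r0 r)
      (Option.rec hq0 hq) (Option.rec h0 hpos)
  choose a ha using ha
  have ha0 : r0 * D = a none := ha none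
  have har : ∀ j, r j * D = a (some j) := fun j => ha (some j)
  have hcap : WithinCapacity (D : ℝ) (a none : ℝ) fun j => (a (some j) : ℝ) := by
    simpa only [one_mul, ha0, har] using (withinCapacity_mul_right_iff (Nat.cast_pos.2 hD)).2 h
  obtain ⟨A, B, hcol, hA, hdel⟩ :=
    exists_schedule_of_withinCapacity (withinCapacity_natCast_iff.1 hcap)
  refine ⟨D, hD, A, B, hcol, fun j => ?_, a none, ha0.le, hdel⟩
  exact (har j).trans_le (by exact_mod_cast hA j)

/-- The rate region of the `2 × N` broadcast-plus-unicasts pattern with fanout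
splitting but no coding: a nonnegative (rational) rate vector is achievable iff
`Σ rᵢ ≤ 1`, `r0 + rᵢ ≤ 1` for each `i`, and `2 r0 + Σ rᵢ ≤ 2`. -/
theorem stmt16 (N : ℕ) (hN : 0 < N) (r0 : ℝ) (r : Fin N → ℝ)
    (hq0 : ∃ q : ℚ, r0 = q) (hq : ∀ i, ∃ q : ℚ, r i = q)
    (h0 : 0 ≤ r0) (hpos : ∀ i, 0 ≤ r i) :
    Achievable2N N r0 r ↔
      (∑ i, r i ≤ 1 ∧ (∀ i, r0 + r i ≤ 1) ∧ 2 * r0 + ∑ i, r i ≤ 2) := by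
  have h : Achievable2N N r0 r ↔ WithinCapacity 1 r0 r :=
    ⟨Achievable2N.withinCapacity hN, achievable2N_of_withinCapacity hq0 hq h0 hpos⟩
  simpa only [WithinCapacity, mul_one] using h
end

section
/- For the enhanced conflict graph G of the 2×N unicasts-and-broadcast pattern (broadcast from input 1, unicasts from input 2), the vectors v(m,U,V) given by u_{1m} = 1/|U|, b_{1j} = 1 - 1/|U| for j ∈ V, u_{2j} = 1/|U| for j ∈ U, and all other coordinates zero — for any U ⊆ [N] with 2 ≤ |U| ≤ N-1, m ∈ [N]\U, and V ⊇ U — are extreme points of QSTAB(G), where QSTAB(G) is defined by: u_{1j}, b_{1j}, u_{2j} ≥ 0; b_{1j} + Σ_k u_{1k} ≤ 1 for each j; Σ_j u_{2j} ≤ 1; and u_{1j} + u_{2j} + b_{1j} ≤ 1 for each j. -/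
/-- `QSTAB` of the enhanced conflict graph of the `2 × N` unicasts-and-broadcast
pattern, as a subset of `ℝ^{3N}`; a point is `(u1, b1, u2)` where `u1 j`,
`b1 j` are the unicast and broadcast-subflow rates at input 1 and `u2 j` the
unicast rates at input 2.  The constraints are nonnegativity together with the
clique inequalities `b1 j + Σ_k u1 k ≤ 1`, `Σ_j u2 j ≤ 1`, and
`u1 j + u2 j + b1 j ≤ 1`. -/
def Q2N (N : ℕ) : Set ((Fin N → ℝ) × (Fin N → ℝ) × (Fin N → ℝ)) :=
  {x | (∀ j, 0 ≤ x.1 j) ∧ (∀ j, 0 ≤ x.2.1 j) ∧ (∀ j, 0 ≤ x.2.2 j) ∧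
    (∀ j, x.2.1 j + ∑ k, x.1 k ≤ 1) ∧ (∑ j, x.2.2 j ≤ 1) ∧
    (∀ j, x.1 j + x.2.2 j + x.2.1 j ≤ 1)}

/-- The vertex `v(m, U, V)` of `QSTAB(G)`: `u1 m = 1/|U|`, `b1 j = 1 - 1/|U|`
for `j ∈ V`, `u2 j = 1/|U|` for `j ∈ U`, all other coordinates zero. -/
noncomputable def vPoint (N : ℕ) (m : Fin N) (U Vt : Finset (Fin N)) :
    (Fin N → ℝ) × (Fin N → ℝ) × (Fin N → ℝ) :=
  (fun j => if j = m then ((U.card : ℝ))⁻¹ else 0,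
   fun j => if j ∈ Vt then 1 - ((U.card : ℝ))⁻¹ else 0,
   fun j => if j ∈ U then ((U.card : ℝ))⁻¹ else 0)

/-!
`v(m, U, V)` satisfies all constraints, and the constraints tight at it already determine it:
the output cliques at `j ∈ U` force `u2 j = u1 m`, so the input-2 clique gives `|U| · u1 m = 1`,
and everything else follows. A point of a polyhedron determined by its tight constraints is
extreme, because a linear functional bounded by `c` on the polyhedron and equal to `c` at an
interior point of a segment equals `c` at both endpoints.
-/

open Finset

section ExtremePoints

variable {ι E : Type*} [AddCommGroup E] [Module ℝ E]

theorem LinearMap.eq_of_le_of_mem_openSegment {f : E →ₗ[ℝ] ℝ} {c : ℝ} {x y z : E}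
    (hy : f y ≤ c) (hz : f z ≤ c) (hx : x ∈ openSegment ℝ y z) (hfx : f x = c) :
    f y = c ∧ f z = c := by
  obtain ⟨a, b, ha, hb, hab, rfl⟩ := hx
  rw [map_add, map_smul, map_smul, smul_eq_mul, smul_eq_mul] at hfx
  have hc : a * c + b * c = c := by rw [← add_mul, hab, one_mul]
  constructor <;>
    nlinarith [mul_le_mul_of_nonneg_left hy ha.le, mul_le_mul_of_nonneg_left hz hb.le]

theorem mem_extremePoints_of_tight_determines {S : Set E} {f : ι → E →ₗ[ℝ] ℝ} {c : ι → ℝ}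
    {x : E} (hS : ∀ y ∈ S, ∀ i, f i y ≤ c i) (hx : x ∈ S)
    (hunique : ∀ y ∈ S, (∀ i, f i x = c i → f i y = c i) → y = x) :
    x ∈ S.extremePoints ℝ := by
  refine mem_extremePoints.mpr ⟨hx, fun y hy z hz hxyz => ?_⟩
  have tight i (hi : f i x = c i) :=
    (f i).eq_of_le_of_mem_openSegment (hS y hy i) (hS z hz i) hxyz hi
  exact ⟨hunique y hy fun i hi => (tight i hi).1, hunique z hz fun i hi => (tight i hi).2⟩

end ExtremePoints

namespace Q2N

abbrev Rates (N : ℕ) := (Fin N → ℝ) × (Fin N → ℝ) × (Fin N → ℝ)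

variable {N : ℕ}

def u1 (j : Fin N) : Rates N →ₗ[ℝ] ℝ := LinearMap.proj j ∘ₗ LinearMap.fst ℝ _ _

def b1 (j : Fin N) : Rates N →ₗ[ℝ] ℝ :=
  LinearMap.proj j ∘ₗ LinearMap.fst ℝ _ _ ∘ₗ LinearMap.snd ℝ _ _

def u2 (j : Fin N) : Rates N →ₗ[ℝ] ℝ :=
  LinearMap.proj j ∘ₗ LinearMap.snd ℝ _ _ ∘ₗ LinearMap.snd ℝ _ _

@[simp] lemma u1_apply (j : Fin N) (x : Rates N) : u1 j x = x.1 j := rfl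
@[simp] lemma b1_apply (j : Fin N) (x : Rates N) : b1 j x = x.2.1 j := rfl
@[simp] lemma u2_apply (j : Fin N) (x : Rates N) : u2 j x = x.2.2 j := rfl

inductive Row (N : ℕ)
  | u1Nonneg (j : Fin N)
  | b1Nonneg (j : Fin N)
  | u2Nonneg (j : Fin N)
  | input1Clique (j : Fin N)
  | input2Clique
  | outputClique (j : Fin N)

@[simp] def Row.form : Row N → Rates N →ₗ[ℝ] ℝ
  | .u1Nonneg j => -u1 j
  | .b1Nonneg j => -b1 j
  | .u2Nonneg j => -u2 j
  | .input1Clique j => b1 j + ∑ k, u1 k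
  | .input2Clique => ∑ j, u2 j
  | .outputClique j => u1 j + u2 j + b1 j

@[simp] def Row.bound : Row N → ℝ
  | .u1Nonneg _ | .b1Nonneg _ | .u2Nonneg _ => 0
  | .input1Clique _ | .input2Clique | .outputClique _ => 1

lemma Row.form_le_bound {x : Rates N} (hx : x ∈ Q2N N) (r : Row N) : r.form x ≤ r.bound := by
  obtain ⟨h1, hb, h2, hin1, hin2, hout⟩ := hx
  cases r <;> simp [*]

variable {m : Fin N} {U V : Finset (Fin N)}

lemma vPoint_mem (hm : m ∉ U) : vPoint N m U V ∈ Q2N N := by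
  have hr0 : 0 ≤ (#U : ℝ)⁻¹ := by positivity
  have hr1 : (#U : ℝ)⁻¹ ≤ 1 := Nat.cast_inv_le_one _
  refine ⟨fun j => ?_, fun j => ?_, fun j => ?_, fun j => ?_, ?_, fun j => ?_⟩
  all_goals simp only [vPoint, sum_ite_eq', sum_ite_mem, mem_univ, if_true, univ_inter, sum_const,
    nsmul_eq_mul]
  all_goals first | exact mul_inv_le_one | split_ifs <;> grind

lemma eq_vPoint_of_tight_system (hm : m ∉ U) (hUV : U ⊆ V) {w : Rates N}
    (hu1 : ∀ j ≠ m, w.1 j = 0) (hb1 : ∀ j ∉ V, w.2.1 j = 0) (hu2 : ∀ j ∉ U, w.2.2 j = 0)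
    (hin1 : ∀ j ∈ V, w.2.1 j + ∑ k, w.1 k = 1) (hin2 : ∑ j, w.2.2 j = 1)
    (hout : ∀ j ∈ U, w.1 j + w.2.2 j + w.2.1 j = 1) :
    w = vPoint N m U V := by
  have hsum1 : ∑ k, w.1 k = w.1 m := sum_eq_single m (fun k _ hk => hu1 k hk) (by simp)
  have hb1V : ∀ j ∈ V, w.2.1 j = 1 - w.1 m := fun j hj => by linarith [hin1 j hj]
  have hu2U : ∀ j ∈ U, w.2.2 j = w.1 m := fun j hj => by
    have hjm : j ≠ m := fun e => hm (e ▸ hj)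
    linarith [hout j hj, hu1 j hjm, hb1V j (hUV hj)]
  have hm_eq : w.1 m = (#U : ℝ)⁻¹ := by
    refine eq_inv_of_mul_eq_one_left ?_
    rw [← hin2, ← sum_subset (subset_univ U) fun j _ hj => hu2 j hj,
      sum_congr rfl hu2U, sum_const, nsmul_eq_mul, mul_comm]
  ext j <;> simp only [vPoint] <;> split_ifs with hj
  · rw [hj, hm_eq]
  · exact hu1 j hj
  · rw [hb1V j hj, hm_eq]
  · exact hb1 j hj
  · rw [hu2U j hj, hm_eq]
  · exact hu2 j hj

lemma eq_vPoint_of_tight (hU : U.Nonempty) (hm : m ∉ U) (hUV : U ⊆ V) {w : Rates N}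
    (htight : ∀ r : Row N, r.form (vPoint N m U V) = r.bound → r.form w = r.bound) :
    w = vPoint N m U V := by
  have hc : (#U : ℝ) ≠ 0 := by exact_mod_cast hU.card_pos.ne'
  have hmU : ∀ j ∈ U, j ≠ m := fun j hj e => hm (e ▸ hj)
  refine eq_vPoint_of_tight_system hm hUV (fun j hj => ?_) (fun j hj => ?_) (fun j hj => ?_)
    (fun j hj => ?_) ?_ (fun j hj => ?_)
  · simpa using htight (.u1Nonneg j) (by simp [vPoint, hj])
  · simpa using htight (.b1Nonneg j) (by simp [vPoint, hj])
  · simpa using htight (.u2Nonneg j) (by simp [vPoint, hj])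
  · simpa using htight (.input1Clique j) (by simp [vPoint, hj])
  · simpa using htight .input2Clique (by simp [vPoint, hc])
  · simpa using htight (.outputClique j) (by simp [vPoint, hj, hmU j hj, hUV hj])

end Q2N

theorem stmt18_general (N : ℕ) (U Vt : Finset (Fin N)) (m : Fin N)
    (h2 : 2 ≤ U.card) (hm : m ∉ U) (hUV : U ⊆ Vt) :
    vPoint N m U Vt ∈ (Q2N N).extremePoints ℝ :=
  mem_extremePoints_of_tight_determines (fun _ => Q2N.Row.form_le_bound) (Q2N.vPoint_mem hm)
    fun _ _ => Q2N.eq_vPoint_of_tight (card_pos.mp (by omega)) hm hUV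

/-- For any `U ⊆ [N]` with `2 ≤ |U| ≤ N - 1`, any `m ∉ U` and any `V ⊇ U`, the
point `v(m, U, V)` is an extreme point of `QSTAB(G)` for the `2 × N`
unicasts-and-broadcast conflict graph. -/
theorem stmt18 (N : ℕ) (U Vt : Finset (Fin N)) (m : Fin N)
    (h2 : 2 ≤ U.card) (hle : U.card ≤ N - 1) (hm : m ∉ U) (hUV : U ⊆ Vt) :
    vPoint N m U Vt ∈ (Q2N N).extremePoints ℝ :=
  stmt18_general N U Vt m h2 hm hUV
end
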